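/- arXiv:2407.03504 — 12 statements merged into one kernel-verified Lean document; each statement's English description precedes it below -/
import Mathlib

section
/- Let cˡ, cʰ, cᶠ be reals with 0 ≤ cˡ < cʰ < cᶠ and K₁ˡ > 0. Set α := K₁ˡ/(cʰ − cˡ), c₃(c₁) := (c₁/2)·(1 + α/(α − c₁)), and c₄(c₁) := ((cʰ − cˡ)²/2)·(α − c₁). Then for every c₁ with K₁ˡ/(cᶠ − cˡ) ≤ c₁ < α one has c₃(c₁)·(cᶠ − cʰ) − c₄(c₁)/(cᶠ − cʰ) ≥ c₁·(cᶠ − cʰ), with equality if and only if c₁ = K₁ˡ/(cᶠ − cˡ). -/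
/-- With `α = K₁ˡ/(cʰ−cˡ)`, `c₃(c₁) = (c₁/2)(1 + α/(α−c₁))` and
`c₄(c₁) = ((cʰ−cˡ)²/2)(α−c₁)`, for every `c₁ ∈ [K₁ˡ/(cᶠ−cˡ), α)` one has
`c₃(c₁)(cᶠ−cʰ) − c₄(c₁)/(cᶠ−cʰ) ≥ c₁(cᶠ−cʰ)`, with equality iff
`c₁ = K₁ˡ/(cᶠ−cˡ)`. -/
theorem stmt_1 (cl ch cf K1l : ℝ)
    (hcl : 0 ≤ cl) (hlh : cl < ch) (hhf : ch < cf) (hK : 0 < K1l) :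
    ∀ c₁ : ℝ, K1l / (cf - cl) ≤ c₁ → c₁ < K1l / (ch - cl) →
      (c₁ * (cf - ch) ≤
        (c₁ / 2) * (1 + (K1l / (ch - cl)) / (K1l / (ch - cl) - c₁)) * (cf - ch)
          - ((ch - cl) ^ 2 / 2) * (K1l / (ch - cl) - c₁) / (cf - ch)) ∧
      ((c₁ / 2) * (1 + (K1l / (ch - cl)) / (K1l / (ch - cl) - c₁)) * (cf - ch)
          - ((ch - cl) ^ 2 / 2) * (K1l / (ch - cl) - c₁) / (cf - ch)
        = c₁ * (cf - ch) ↔ c₁ = K1l / (cf - cl)) := by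
  intro c₁ hle hlt
  have hch : (0:ℝ) < ch - cl := by linarith
  have hfh : (0:ℝ) < cf - ch := by linarith
  have hfl : (0:ℝ) < cf - cl := by linarith
  have hd : (0:ℝ) < K1l / (ch - cl) - c₁ := by linarith
  have hc1pos : 0 < c₁ := lt_of_lt_of_le (div_pos hK hfl) hle
  set d := K1l / (ch - cl) - c₁ with hdd
  have hKeq : K1l = (ch - cl) * (c₁ + d) := by
    field_simp [hdd]
    have e : (ch - cl) * (K1l / (ch - cl)) = K1l := by field_simp
    linear_combination -(ch - cl) * hdd - e
  have key : (c₁ / 2) * (1 + (K1l / (ch - cl)) / d) * (cf - ch)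
      - ((ch - cl) ^ 2 / 2) * d / (cf - ch) - c₁ * (cf - ch)
      = (c₁ * (cf - cl) - K1l) * (c₁ * (cf - ch) + (ch - cl) * d)
        / (2 * d * (cf - ch)) := by
    rw [hKeq]
    field_simp
    ring
  have hfac : 0 < c₁ * (cf - ch) + (ch - cl) * d := by positivity
  have hnum : 0 ≤ c₁ * (cf - cl) - K1l := by
    have := (div_le_iff₀ hfl).mp hle
    linarith
  have hden : 0 < 2 * d * (cf - ch) := by positivity
  constructor
  · nlinarith [div_nonneg (mul_nonneg hnum hfac.le) hden.le]
  · constructor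
    · intro h
      have h0 : (c₁ * (cf - cl) - K1l) * (c₁ * (cf - ch) + (ch - cl) * d)
          / (2 * d * (cf - ch)) = 0 := by linarith [key, h]
      have h1 : (c₁ * (cf - cl) - K1l) * (c₁ * (cf - ch) + (ch - cl) * d) = 0 := by
        rcases div_eq_zero_iff.mp h0 with h1 | h1
        · exact h1
        · exact absurd h1 hden.ne'
      have h2 : c₁ * (cf - cl) - K1l = 0 := by
        rcases mul_eq_zero.mp h1 with h2 | h2
        · exact h2
        · exact absurd h2 hfac.ne'
      field_simp
      linarith
    · intro h
      have h2 : c₁ * (cf - cl) - K1l = 0 := by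
        rw [h]; field_simp; ring
      have : (c₁ * (cf - cl) - K1l) * (c₁ * (cf - ch) + (ch - cl) * d)
          / (2 * d * (cf - ch)) = 0 := by rw [h2]; simp
      linarith [key, this]
end

section
/- Let cˡ, cʰ, cᶠ be reals with 0 ≤ cˡ < cʰ < cᶠ and K₁ˡ > 0. Set α := K₁ˡ/(cʰ − cˡ), c₃(c₁) := (c₁/2)·(1 + α/(α − c₁)), and c₄(c₁) := ((cʰ − cˡ)²/2)·(α − c₁). Then for every c₁ with K₁ˡ/(cᶠ − cˡ) ≤ c₁ < α one has c₃(c₁)·(cᶠ − cʰ) + c₄(c₁)/(cᶠ − cʰ) ≥ c₁·(cᶠ − cˡ), with equality if and only if c₁ = K₁ˡ/(cᶠ − cˡ). -/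
/-- With `α = K₁ˡ/(cʰ−cˡ)`, `c₃(c₁) = (c₁/2)(1 + α/(α−c₁))` and
`c₄(c₁) = ((cʰ−cˡ)²/2)(α−c₁)`, for every `c₁ ∈ [K₁ˡ/(cᶠ−cˡ), α)` one has
`c₃(c₁)(cᶠ−cʰ) + c₄(c₁)/(cᶠ−cʰ) ≥ c₁(cᶠ−cˡ)`, with equality iff
`c₁ = K₁ˡ/(cᶠ−cˡ)`. -/
theorem stmt_2 (cl ch cf K1l : ℝ)
    (hcl : 0 ≤ cl) (hlh : cl < ch) (hhf : ch < cf) (hK : 0 < K1l) :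
    ∀ c₁ : ℝ, K1l / (cf - cl) ≤ c₁ → c₁ < K1l / (ch - cl) →
      (c₁ * (cf - cl) ≤
        (c₁ / 2) * (1 + (K1l / (ch - cl)) / (K1l / (ch - cl) - c₁)) * (cf - ch)
          + ((ch - cl) ^ 2 / 2) * (K1l / (ch - cl) - c₁) / (cf - ch)) ∧
      ((c₁ / 2) * (1 + (K1l / (ch - cl)) / (K1l / (ch - cl) - c₁)) * (cf - ch)
          + ((ch - cl) ^ 2 / 2) * (K1l / (ch - cl) - c₁) / (cf - ch)
        = c₁ * (cf - cl) ↔ c₁ = K1l / (cf - cl)) := by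
  intro c₁ h1 h2
  have he : (0:ℝ) < ch - cl := by linarith
  have hd : (0:ℝ) < cf - ch := by linarith
  have hfl : (0:ℝ) < cf - cl := by linarith
  have hA : (0:ℝ) < K1l / (ch - cl) - c₁ := by linarith
  have hB : (0:ℝ) < K1l - (ch - cl) * c₁ := by
    have h := mul_pos hA he
    have e : (K1l / (ch - cl) - c₁) * (ch - cl) = K1l - (ch - cl) * c₁ := by
      field_simp
    linarith [e ▸ h]
  have key :
      (c₁ / 2) * (1 + (K1l / (ch - cl)) / (K1l / (ch - cl) - c₁)) * (cf - ch)
          + ((ch - cl) ^ 2 / 2) * (K1l / (ch - cl) - c₁) / (cf - ch)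
        - c₁ * (cf - cl)
        = (c₁ * (cf - cl) - K1l) ^ 2 /
            (2 * (cf - ch) * (K1l / (ch - cl) - c₁)) := by
    have e : K1l / (ch - cl) - c₁ = (K1l - (ch - cl) * c₁) / (ch - cl) := by
      field_simp
    rw [e]
    generalize hD : K1l - (ch - cl) * c₁ = D at hB ⊢
    obtain rfl : K1l = D + (ch - cl) * c₁ := by linarith
    field_simp
    ring
  have hden : (0:ℝ) < 2 * (cf - ch) * (K1l / (ch - cl) - c₁) := by positivity
  have hnn : (0:ℝ) ≤ (c₁ * (cf - cl) - K1l) ^ 2 /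
      (2 * (cf - ch) * (K1l / (ch - cl) - c₁)) :=
    div_nonneg (sq_nonneg _) hden.le
  constructor
  · linarith [key]
  · constructor
    · intro h
      have h0 : (c₁ * (cf - cl) - K1l) ^ 2 /
            (2 * (cf - ch) * (K1l / (ch - cl) - c₁)) = 0 := by linarith [key]
      have h0' : c₁ * (cf - cl) - K1l = 0 := by
        rcases div_eq_zero_iff.mp h0 with h | h
        · exact pow_eq_zero_iff (two_ne_zero) |>.mp h
        · exact absurd h hden.ne'
      field_simp
      linarith
    · intro h
      have h0 : c₁ * (cf - cl) - K1l = 0 := by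
        rw [h]; field_simp; ring
      rw [h0] at key
      simp at key
      linarith
end

section
/- Let cˡ < cʰ be reals, K₁ˡ > 0, α := K₁ˡ/(cʰ − cˡ), and let c₁ ∈ (0, α). Then there is a unique triple of reals (c₃, c₄, p̂) satisfying the system K₁ˡ = c₁·(p̂ − cˡ), c₁·(p̂ − cˡ) = c₃·(p̂ − cʰ) + c₄/(p̂ − cʰ), and c₁·(p̂ − cʰ) = c₃·(p̂ − cʰ) − c₄/(p̂ − cʰ), namely c₄ = ((cʰ − cˡ)²/2)·(α − c₁), c₃ = (c₁/2)·(1 + α/(α − c₁)), and p̂ = cʰ + ((cʰ − cˡ)/c₁)·(α − c₁); moreover p̂ > cʰ. -/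
/-- For `c₁ ∈ (0, α)` with `α = K₁ˡ/(cʰ−cˡ)`, the system
`K₁ˡ = c₁(p̂−cˡ)`, `c₁(p̂−cˡ) = c₃(p̂−cʰ) + c₄/(p̂−cʰ)`,
`c₁(p̂−cʰ) = c₃(p̂−cʰ) − c₄/(p̂−cʰ)` has the unique solution
`c₄ = ((cʰ−cˡ)²/2)(α−c₁)`, `c₃ = (c₁/2)(1 + α/(α−c₁))`,
`p̂ = cʰ + ((cʰ−cˡ)/c₁)(α−c₁)`; moreover `p̂ > cʰ`. -/
theorem stmt_4 (cl ch K1l c₁ : ℝ) (hlh : cl < ch) (hK : 0 < K1l)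
    (hc₁ : c₁ ∈ Set.Ioo 0 (K1l / (ch - cl))) :
    (∀ c₃ c₄ phat : ℝ,
      (K1l = c₁ * (phat - cl) ∧
       c₁ * (phat - cl) = c₃ * (phat - ch) + c₄ / (phat - ch) ∧
       c₁ * (phat - ch) = c₃ * (phat - ch) - c₄ / (phat - ch)) ↔
      (c₄ = ((ch - cl) ^ 2 / 2) * (K1l / (ch - cl) - c₁) ∧
       c₃ = (c₁ / 2) * (1 + (K1l / (ch - cl)) / (K1l / (ch - cl) - c₁)) ∧
       phat = ch + ((ch - cl) / c₁) * (K1l / (ch - cl) - c₁))) ∧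
    ch < ch + ((ch - cl) / c₁) * (K1l / (ch - cl) - c₁) := by
  obtain ⟨h0, hα⟩ := hc₁
  have hd : (0:ℝ) < ch - cl := by linarith
  have hd' : ch - cl ≠ 0 := ne_of_gt hd
  have hc₁' : c₁ ≠ 0 := ne_of_gt h0
  have hdiff : 0 < K1l / (ch - cl) - c₁ := by linarith
  have hdiff' : K1l / (ch - cl) - c₁ ≠ 0 := ne_of_gt hdiff
  have hph : 0 < ((ch - cl) / c₁) * (K1l / (ch - cl) - c₁) :=
    mul_pos (div_pos hd h0) hdiff
  have hApos : 0 < K1l - c₁ * (ch - cl) := by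
    have := (lt_div_iff₀ hd).mp hα
    linarith
  have hA : K1l - c₁ * (ch - cl) ≠ 0 := ne_of_gt hApos
  -- bridge equalities expressing everything via A := K1l - c₁*(ch-cl)
  have E4 : ((ch - cl) ^ 2 / 2) * (K1l / (ch - cl) - c₁)
      = (ch - cl) * (K1l - c₁ * (ch - cl)) / 2 := by
    field_simp
  have E3 : (c₁ / 2) * (1 + (K1l / (ch - cl)) / (K1l / (ch - cl) - c₁))
      = (c₁ / 2) * (1 + K1l / (K1l - c₁ * (ch - cl))) := by
    have core : K1l / (ch - cl) / (K1l / (ch - cl) - c₁)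
        = K1l / (K1l - c₁ * (ch - cl)) := by
      rw [div_eq_div_iff hdiff' hA]
      field_simp
    rw [core]
  have EP : ch + ((ch - cl) / c₁) * (K1l / (ch - cl) - c₁)
      = ch + (K1l - c₁ * (ch - cl)) / c₁ := by
    congr 1
    field_simp
  refine ⟨fun c₃ c₄ phat => ⟨?_, ?_⟩, by linarith⟩
  · rintro ⟨h1, h2, h3⟩
    have hphat : phat = ch + (K1l - c₁ * (ch - cl)) / c₁ := by
      field_simp
      first
      | linear_combination h1
      | linear_combination (-1 : ℝ) * h1
      | linear_combination (2 : ℝ) * h1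
      | linear_combination (-2 : ℝ) * h1
    have ht : 0 < phat - ch := by
      rw [hphat]
      have : 0 < (K1l - c₁ * (ch - cl)) / c₁ := div_pos hApos h0
      linarith
    have ht' : phat - ch ≠ 0 := ne_of_gt ht
    have e4 : c₁ * (ch - cl) = 2 * (c₄ / (phat - ch)) := by linarith
    have hc4 : c₄ = c₁ * (ch - cl) * (phat - ch) / 2 := by
      field_simp at e4
      linarith
    have e3 : c₃ * (phat - ch) = (c₁ * (phat - cl) + c₁ * (phat - ch)) / 2 := by
      linarith
    refine ⟨?_, ?_, by rw [EP, hphat]⟩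
    · rw [E4, hc4, hphat]
      field_simp
      ring
    · rw [E3]
      rw [hphat] at e3
      have key : ((c₁ / 2) * (1 + K1l / (K1l - c₁ * (ch - cl)))) *
          ((ch + (K1l - c₁ * (ch - cl)) / c₁) - ch) =
          (c₁ * ((ch + (K1l - c₁ * (ch - cl)) / c₁) - cl) +
           c₁ * ((ch + (K1l - c₁ * (ch - cl)) / c₁) - ch)) / 2 := by
        field_simp
        ring
      have hne : ((ch + (K1l - c₁ * (ch - cl)) / c₁) - ch) ≠ 0 := by
        have : 0 < (K1l - c₁ * (ch - cl)) / c₁ := div_pos hApos h0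
        intro h; linarith
      exact mul_right_cancel₀ hne (e3.trans key.symm)
  · rintro ⟨h4, h3, hp⟩
    rw [E4] at h4
    rw [E3] at h3
    rw [EP] at hp
    have hsub : phat - ch = (K1l - c₁ * (ch - cl)) / c₁ := by rw [hp]; ring
    have hsub2 : phat - cl = (ch - cl) + (K1l - c₁ * (ch - cl)) / c₁ := by
      rw [hp]; ring
    have hdiv : c₄ / (phat - ch) = c₁ * (ch - cl) / 2 := by
      rw [h4, hsub]
      rw [div_div_eq_mul_div, mul_div_assoc, mul_comm, ← mul_div_assoc]
      field_simp
    refine ⟨?_, ?_, ?_⟩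
    · rw [hsub2]
      field_simp
      ring
    · rw [hsub2, hdiv, hsub, h3]
      field_simp
      ring
    · rw [hdiv, hsub, h3]
      field_simp
      ring
end

section
/- Let cˡ < cʰ be reals and let U = (cʰ, b) be an open interval with b > cʰ. Suppose S₁, S₂ : ℝ → ℝ are differentiable on U and satisfy the coupled system S₁(p) = (p − cˡ)·S₂'(p) and S₂(p) = (p − cʰ)·S₁'(p) for all p ∈ U. If S₁ has a finite limit as p → cʰ from the right, then there exists a constant c₁ ∈ ℝ such that S₁(p) = c₁·(p − cˡ) and S₂(p) = c₁·(p − cʰ) for all p ∈ U. -/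
open Filter Set

/-- A function with zero derivative on an open interval is constant there. -/
lemma const_on_Ioo_aux {a b : ℝ} {f : ℝ → ℝ}
    (hf : ∀ x ∈ Set.Ioo a b, HasDerivAt f 0 x) :
    ∀ x ∈ Set.Ioo a b, ∀ y ∈ Set.Ioo a b, f x = f y := by
  have key : ∀ x ∈ Set.Ioo a b, ∀ y ∈ Set.Ioo a b, x < y → f x = f y := by
    intro x hx y hy hxy
    have hsub : Set.Icc x y ⊆ Set.Ioo a b := fun z hz =>
      ⟨lt_of_lt_of_le hx.1 hz.1, lt_of_le_of_lt hz.2 hy.2⟩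
    have hcont : ContinuousOn f (Set.Icc x y) := fun z hz =>
      ((hf z (hsub hz)).continuousAt).continuousWithinAt
    obtain ⟨c, _, hc0⟩ := exists_hasDerivAt_eq_slope f (fun _ => (0:ℝ)) hxy hcont
      (fun z hz => hf z (hsub ⟨hz.1.le, hz.2.le⟩))
    have hne : y - x ≠ 0 := sub_ne_zero.mpr hxy.ne'
    have : f y - f x = 0 := by
      have := hc0.symm
      rwa [div_eq_iff hne, zero_mul] at this
    linarith
  intro x hx y hy
  rcases lt_trichotomy x y with h | h | h
  · exact key x hx y hy h
  · rw [h]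
  · exact (key y hy x hx h).symm

/-- On `U = (cʰ, b)`, if differentiable `S₁, S₂` satisfy
`S₁(p) = (p−cˡ)·S₂'(p)` and `S₂(p) = (p−cʰ)·S₁'(p)`, and `S₁` has a finite
limit as `p → cʰ⁺`, then `S₁(p) = c₁(p−cˡ)` and `S₂(p) = c₁(p−cʰ)` on `U` for
some constant `c₁`. -/
theorem stmt_5 (cl ch b : ℝ) (hlh : cl < ch) (hb : ch < b)
    (S₁ S₂ S₁' S₂' : ℝ → ℝ)
    (hd₁ : ∀ p ∈ Set.Ioo ch b, HasDerivAt S₁ (S₁' p) p)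
    (hd₂ : ∀ p ∈ Set.Ioo ch b, HasDerivAt S₂ (S₂' p) p)
    (hFOC₁ : ∀ p ∈ Set.Ioo ch b, S₁ p = (p - cl) * S₂' p)
    (hFOC₂ : ∀ p ∈ Set.Ioo ch b, S₂ p = (p - ch) * S₁' p)
    (hlim : ∃ L : ℝ, Filter.Tendsto S₁ (nhdsWithin ch (Set.Ioo ch b)) (nhds L)) :
    ∃ c₁ : ℝ, ∀ p ∈ Set.Ioo ch b, S₁ p = c₁ * (p - cl) ∧ S₂ p = c₁ * (p - ch) := by
  obtain ⟨L, hL⟩ := hlim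
  have hd0 : (0:ℝ) < ch - cl := by linarith
  have hpl : ∀ p ∈ Set.Ioo ch b, (0:ℝ) < p - cl := fun p hp => by
    have := hp.1; linarith
  have hph : ∀ p ∈ Set.Ioo ch b, (0:ℝ) < p - ch := fun p hp => by
    have := hp.1; linarith
  have hp₀ : (ch + b)/2 ∈ Set.Ioo ch b := ⟨by linarith, by linarith⟩
  -- Step 1: W := S₁ (p - ch) - S₂ (p - cl) is constant
  have hW : ∀ p ∈ Set.Ioo ch b,
      HasDerivAt (fun q => S₁ q * (q - ch) - S₂ q * (q - cl)) 0 p := by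
    intro p hp
    have h1 := (hd₁ p hp).mul ((hasDerivAt_id p).sub_const ch)
    have h2 := (hd₂ p hp).mul ((hasDerivAt_id p).sub_const cl)
    have h3 := h1.sub h2
    refine h3.congr_deriv ?_
    have e1 := hFOC₁ p hp
    have e2 := hFOC₂ p hp
    simp only [id_eq]
    rw [e1, e2]; ring
  obtain ⟨K, hK⟩ : ∃ K : ℝ, ∀ p ∈ Set.Ioo ch b,
      S₁ p * (p - ch) - S₂ p * (p - cl) = K :=
    ⟨_, fun p hp => const_on_Ioo_aux hW p hp _ hp₀⟩
  -- Step 2: derivative of h := S₁/(p-cl)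
  have hh : ∀ p ∈ Set.Ioo ch b,
      HasDerivAt (fun q => S₁ q * (q - cl)⁻¹) (-K / ((p - ch) * (p - cl)^2)) p := by
    intro p hp
    have hl := hpl p hp
    have hhh := hph p hp
    have hinv : HasDerivAt (fun q => (q - cl)⁻¹) (-1 / (p - cl)^2) p := by
      simpa using ((hasDerivAt_id p).sub_const cl).fun_inv (ne_of_gt hl)
    have h3 := (hd₁ p hp).mul hinv
    refine h3.congr_deriv ?_
    have eK := hK p hp
    have hS₁' : S₁' p = S₂ p / (p - ch) := by
      rw [hFOC₂ p hp]; field_simp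
    rw [hS₁']
    have hl' : p - cl ≠ 0 := ne_of_gt hl
    have hh' : p - ch ≠ 0 := ne_of_gt hhh
    have hnum : -K = S₂ p * (p - cl) - S₁ p * (p - ch) := by linarith
    rw [hnum]
    field_simp
    ring
  -- Step 3: derivative of the explicit antiderivative G
  have hG : ∀ p ∈ Set.Ioo ch b,
      HasDerivAt (fun q => K/(ch - cl)^2 * (Real.log (q - ch) - Real.log (q - cl))
          + K/(ch - cl) * (q - cl)⁻¹)
        (K / ((p - ch) * (p - cl)^2)) p := by
    intro p hp
    have hl := hpl p hp
    have hhh := hph p hp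
    have hlog1 : HasDerivAt (fun q => Real.log (q - ch)) (1 / (p - ch)) p := by
      simpa using ((hasDerivAt_id p).sub_const ch).log (ne_of_gt hhh)
    have hlog2 : HasDerivAt (fun q => Real.log (q - cl)) (1 / (p - cl)) p := by
      simpa using ((hasDerivAt_id p).sub_const cl).log (ne_of_gt hl)
    have hinv : HasDerivAt (fun q => (q - cl)⁻¹) (-1 / (p - cl)^2) p := by
      simpa using ((hasDerivAt_id p).sub_const cl).fun_inv (ne_of_gt hl)
    have h3 := (((hlog1.sub hlog2).const_mul (K/(ch - cl)^2)).add
      (hinv.const_mul (K/(ch - cl))))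
    refine h3.congr_deriv ?_
    have hl' : p - cl ≠ 0 := ne_of_gt hl
    have hh' : p - ch ≠ 0 := ne_of_gt hhh
    have hd' : ch - cl ≠ 0 := ne_of_gt hd0
    field_simp
    ring
  -- Step 4: h + G is constant
  have hF : ∀ p ∈ Set.Ioo ch b,
      HasDerivAt (fun q => S₁ q * (q - cl)⁻¹ +
        (K/(ch - cl)^2 * (Real.log (q - ch) - Real.log (q - cl))
          + K/(ch - cl) * (q - cl)⁻¹)) 0 p := by
    intro p hp
    have := (hh p hp).add (hG p hp)
    refine this.congr_deriv ?_
    have hl' : p - cl ≠ 0 := ne_of_gt (hpl p hp)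
    have hh' : p - ch ≠ 0 := ne_of_gt (hph p hp)
    field_simp
    ring
  obtain ⟨C₀, hFc⟩ : ∃ C₀ : ℝ, ∀ p ∈ Set.Ioo ch b,
      S₁ p * (p - cl)⁻¹ + (K/(ch - cl)^2 * (Real.log (p - ch) - Real.log (p - cl))
        + K/(ch - cl) * (p - cl)⁻¹) = C₀ :=
    ⟨_, fun p hp => const_on_Ioo_aux hF p hp _ hp₀⟩
  -- Step 5: limit analysis, K = 0
  haveI hNB : (nhdsWithin ch (Set.Ioo ch b)).NeBot := by
    apply mem_closure_iff_nhdsWithin_neBot.mp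
    rw [closure_Ioo hb.ne]
    exact ⟨le_refl ch, hb.le⟩
  have htsub : Tendsto (fun p : ℝ => p - cl) (nhdsWithin ch (Set.Ioo ch b))
      (nhds (ch - cl)) :=
    ((continuous_id.tendsto ch).mono_left nhdsWithin_le_nhds).sub_const cl
  have htinv : Tendsto (fun p : ℝ => (p - cl)⁻¹) (nhdsWithin ch (Set.Ioo ch b))
      (nhds (ch - cl)⁻¹) := htsub.inv₀ (ne_of_gt hd0)
  have hth : Tendsto (fun p => S₁ p * (p - cl)⁻¹) (nhdsWithin ch (Set.Ioo ch b))
      (nhds (L * (ch - cl)⁻¹)) := hL.mul htinv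
  have htlog : Tendsto (fun p : ℝ => Real.log (p - cl)) (nhdsWithin ch (Set.Ioo ch b))
      (nhds (Real.log (ch - cl))) := ((Real.continuousAt_log (ne_of_gt hd0)).tendsto).comp htsub
  have hlogbot : Tendsto (fun p : ℝ => Real.log (p - ch)) (nhdsWithin ch (Set.Ioo ch b))
      Filter.atBot := by
    apply Real.tendsto_log_nhdsGT_zero.comp
    rw [tendsto_nhdsWithin_iff]
    constructor
    · simpa using ((continuous_id.tendsto ch).mono_left nhdsWithin_le_nhds).sub_const ch
    · filter_upwards [self_mem_nhdsWithin] with p hp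
      exact sub_pos.mpr hp.1
  have hKzero : K = 0 := by
    by_contra hKne
    have hcomb : Tendsto (fun p => C₀ - S₁ p * (p - cl)⁻¹
        + K/(ch - cl)^2 * Real.log (p - cl) - K/(ch - cl) * (p - cl)⁻¹)
        (nhdsWithin ch (Set.Ioo ch b))
        (nhds (C₀ - L * (ch - cl)⁻¹ + K/(ch - cl)^2 * Real.log (ch - cl)
          - K/(ch - cl) * (ch - cl)⁻¹)) :=
      (((tendsto_const_nhds.sub hth).add (htlog.const_mul (K/(ch - cl)^2))).sub
        (htinv.const_mul (K/(ch - cl))))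
    have heq : Tendsto (fun p => K/(ch - cl)^2 * Real.log (p - ch))
        (nhdsWithin ch (Set.Ioo ch b))
        (nhds (C₀ - L * (ch - cl)⁻¹ + K/(ch - cl)^2 * Real.log (ch - cl)
          - K/(ch - cl) * (ch - cl)⁻¹)) := by
      apply hcomb.congr'
      filter_upwards [self_mem_nhdsWithin] with p hp
      have := hFc p hp
      linarith
    have hc : K/(ch - cl)^2 ≠ 0 := by
      apply div_ne_zero hKne; positivity
    have hlog' : Tendsto (fun p : ℝ => Real.log (p - ch)) (nhdsWithin ch (Set.Ioo ch b))
        (nhds ((K/(ch - cl)^2)⁻¹ * (C₀ - L * (ch - cl)⁻¹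
          + K/(ch - cl)^2 * Real.log (ch - cl) - K/(ch - cl) * (ch - cl)⁻¹))) := by
      have h2 := heq.const_mul (K/(ch - cl)^2)⁻¹
      apply h2.congr
      intro p
      field_simp
    exact not_tendsto_nhds_of_tendsto_atBot hlogbot _ hlog'
  -- Step 6: conclude
  have hhzero : ∀ p ∈ Set.Ioo ch b, HasDerivAt (fun q => S₁ q * (q - cl)⁻¹) 0 p := by
    intro p hp
    have := hh p hp
    rw [hKzero] at this
    simpa using this
  obtain ⟨c₁, hc₁⟩ : ∃ c₁ : ℝ, ∀ p ∈ Set.Ioo ch b, S₁ p * (p - cl)⁻¹ = c₁ :=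
    ⟨_, fun p hp => const_on_Ioo_aux hhzero p hp _ hp₀⟩
  refine ⟨c₁, fun p hp => ?_⟩
  have hl := hpl p hp
  have hlne : p - cl ≠ 0 := ne_of_gt hl
  have hS1 : S₁ p = c₁ * (p - cl) := by
    have := hc₁ p hp
    field_simp at this
    linarith
  refine ⟨hS1, ?_⟩
  have eK := hK p hp
  rw [hKzero] at eK
  have h2 : S₂ p * (p - cl) = c₁ * (p - ch) * (p - cl) := by
    linear_combination -eK + (p - ch) * hS1
  exact mul_right_cancel₀ hlne h2
end

section
/- Let cʰ be a real number and U ⊆ (cʰ, ∞) an open interval. Suppose S₁, S₂ : ℝ → ℝ are differentiable on U and satisfy S₁(p) = (p − cʰ)·S₂'(p) and S₂(p) = (p − cʰ)·S₁'(p) for all p ∈ U. Then there exist constants c₃, c₄ ∈ ℝ such that S₁(p) = c₃·(p − cʰ) + c₄/(p − cʰ) and S₂(p) = c₃·(p − cʰ) − c₄/(p − cʰ) for all p ∈ U. -/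
lemma aux_const (a b : ℝ) (f : ℝ → ℝ) (h : ∀ x ∈ Set.Ioo a b, HasDerivAt f 0 x) :
    ∀ x ∈ Set.Ioo a b, ∀ y ∈ Set.Ioo a b, f x = f y := by
  intro x hx y hy
  apply (convex_Ioo a b).is_const_of_fderivWithin_eq_zero
    (fun z hz => ((h z hz).differentiableAt).differentiableWithinAt) ?_ hx hy
  intro z hz
  rw [fderivWithin_eq_fderiv (isOpen_Ioo.uniqueDiffOn z hz) (h z hz).differentiableAt]
  have := (h z hz).hasFDerivAt.fderiv
  rw [this]; ext; simp

/-- On an open interval `U = (a, b) ⊆ (cʰ, ∞)`, if differentiable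
`S₁, S₂` satisfy `S₁(p) = (p−cʰ)·S₂'(p)` and `S₂(p) = (p−cʰ)·S₁'(p)`, then
`S₁(p) = c₃(p−cʰ) + c₄/(p−cʰ)` and `S₂(p) = c₃(p−cʰ) − c₄/(p−cʰ)` on `U` for
some constants `c₃, c₄`. -/
theorem stmt_6 (ch a b : ℝ) (hab : ch ≤ a)
    (S₁ S₂ S₁' S₂' : ℝ → ℝ)
    (hd₁ : ∀ p ∈ Set.Ioo a b, HasDerivAt S₁ (S₁' p) p)
    (hd₂ : ∀ p ∈ Set.Ioo a b, HasDerivAt S₂ (S₂' p) p)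
    (hFOC₁ : ∀ p ∈ Set.Ioo a b, S₁ p = (p - ch) * S₂' p)
    (hFOC₂ : ∀ p ∈ Set.Ioo a b, S₂ p = (p - ch) * S₁' p) :
    ∃ c₃ c₄ : ℝ, ∀ p ∈ Set.Ioo a b,
      S₁ p = c₃ * (p - ch) + c₄ / (p - ch) ∧
      S₂ p = c₃ * (p - ch) - c₄ / (p - ch) := by
  rcases Set.eq_empty_or_nonempty (Set.Ioo a b) with he | ⟨p₀, hp₀⟩
  · exact ⟨0, 0, fun p hp => by rw [he] at hp; exact absurd hp (Set.notMem_empty p)⟩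
  have hpos : ∀ p ∈ Set.Ioo a b, 0 < p - ch := fun p hp => by
    have := hp.1; linarith
  -- g = (S₁+S₂)/(p-ch) is constant
  have hg : ∀ p ∈ Set.Ioo a b,
      HasDerivAt (fun x => (S₁ x + S₂ x) / (x - ch)) 0 p := by
    intro p hp
    have hne : p - ch ≠ 0 := ne_of_gt (hpos p hp)
    have h1 : HasDerivAt (fun x => S₁ x + S₂ x) (S₁' p + S₂' p) p :=
      (hd₁ p hp).add (hd₂ p hp)
    have h2 : HasDerivAt (fun x => x - ch) 1 p := (hasDerivAt_id p).sub_const ch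
    have := h1.div h2 hne
    refine this.congr_deriv (Eq.symm ?_)
    rw [hFOC₁ p hp, hFOC₂ p hp]
    field_simp
    ring
  -- h = (p-ch)*(S₁-S₂) is constant
  have hh : ∀ p ∈ Set.Ioo a b,
      HasDerivAt (fun x => (x - ch) * (S₁ x - S₂ x)) 0 p := by
    intro p hp
    have h1 : HasDerivAt (fun x => S₁ x - S₂ x) (S₁' p - S₂' p) p :=
      (hd₁ p hp).sub (hd₂ p hp)
    have h2 : HasDerivAt (fun x => x - ch) 1 p := (hasDerivAt_id p).sub_const ch
    have := h2.mul h1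
    refine this.congr_deriv (Eq.symm ?_)
    rw [hFOC₁ p hp, hFOC₂ p hp]
    ring
  refine ⟨(S₁ p₀ + S₂ p₀) / (p₀ - ch) / 2, (p₀ - ch) * (S₁ p₀ - S₂ p₀) / 2,
    fun p hp => ?_⟩
  have hgp := aux_const a b _ hg p hp p₀ hp₀
  have hhp := aux_const a b _ hh p hp p₀ hp₀
  have hne : p - ch ≠ 0 := ne_of_gt (hpos p hp)
  have hne0 : p₀ - ch ≠ 0 := ne_of_gt (hpos p₀ hp₀)
  rw [div_eq_div_iff hne hne0] at hgp
  constructor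
  · field_simp
    linear_combination (p - ch) * hgp + (p₀ - ch) * hhp
  · field_simp
    linear_combination (p - ch) * hgp - (p₀ - ch) * hhp
end

section
/- Let cˡ, cʰ, cᶠ be reals with 0 ≤ cˡ < cʰ < cᶠ, and K₁ˡ > K₂ʰ > 0 with K₁ˡ > ((cᶠ − cˡ)/(cᶠ − cʰ))·K₂ʰ. For δ ∈ [0, K₂ʰ) define the total strategic supply T_δ : ℝ → ℝ by T_δ(p) = 0 for p < cʰ, T_δ(p) = ((K₂ʰ − δ)/(cᶠ − cʰ))·(2p − cˡ − cʰ) for cʰ ≤ p < cᶠ, and T_δ(p) = K₁ˡ + K₂ʰ for p ≥ cᶠ. Then for all 0 ≤ δ < δ' < K₂ʰ: (i) T_{δ'}(p) ≤ T_δ(p) for every p, with strict inequality for p ∈ [cʰ, cᶠ); and (ii) for every demand level D with 0 < D ≤ K₁ˡ + K₂ʰ, the market-clearing price p*(δ) := sInf{p ∈ [0, cᶠ] : T_δ(p) ≥ D} satisfies p*(δ) ≤ p*(δ'). That is, transferring high-cost capacity from Firm 2 to Firm 1 under abundance weakly increases the market-clearing price. -/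
/-- Under abundance, transferring high-cost capacity `δ` from
Firm 2 to Firm 1 pointwise (weakly, and strictly on `[cʰ, cᶠ)`) lowers the
total strategic supply `T_δ`, hence weakly raises the market-clearing price
`p*(δ) = sInf {p ∈ [0, cᶠ] : T_δ(p) ≥ D}` for every demand `0 < D ≤ K₁ˡ+K₂ʰ`. -/
theorem stmt_8 (cl ch cf K1l K2h : ℝ)
    (hcl : 0 ≤ cl) (hlh : cl < ch) (hhf : ch < cf)
    (hK2 : 0 < K2h) (hK12 : K2h < K1l)
    (habund : ((cf - cl) / (cf - ch)) * K2h < K1l) :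
    let T := fun (δ p : ℝ) =>
      if p < ch then (0 : ℝ)
      else if p < cf then ((K2h - δ) / (cf - ch)) * (2 * p - cl - ch)
      else K1l + K2h
    ∀ δ δ' : ℝ, 0 ≤ δ → δ < δ' → δ' < K2h →
      ((∀ p : ℝ, T δ' p ≤ T δ p) ∧
       (∀ p ∈ Set.Ico ch cf, T δ' p < T δ p) ∧
       (∀ D : ℝ, 0 < D → D ≤ K1l + K2h →
         sInf {p : ℝ | p ∈ Set.Icc 0 cf ∧ D ≤ T δ p} ≤
         sInf {p : ℝ | p ∈ Set.Icc 0 cf ∧ D ≤ T δ' p})) := by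
  intro T δ δ' hδ hδδ' hδ'K
  have hcfch : 0 < cf - ch := by linarith
  have hstrict : ∀ p ∈ Set.Ico ch cf, T δ' p < T δ p := by
    intro p hp
    obtain ⟨h1, h2⟩ := hp
    have hnlt : ¬ p < ch := not_lt.mpr h1
    simp only [T, hnlt, if_false, if_pos h2]
    have hpos : 0 < 2 * p - cl - ch := by linarith
    have : (K2h - δ') / (cf - ch) < (K2h - δ) / (cf - ch) := by
      gcongr <;> linarith
    exact mul_lt_mul_of_pos_right this hpos
  have hle : ∀ p : ℝ, T δ' p ≤ T δ p := by
    intro p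
    by_cases h1 : p < ch
    · simp only [T, if_pos h1]; exact le_refl 0
    · by_cases h2 : p < cf
      · exact (hstrict p ⟨not_lt.mp h1, h2⟩).le
      · simp only [T, if_neg h1, if_neg h2]; exact le_refl _
  refine ⟨hle, hstrict, ?_⟩
  intro D hD hDle
  apply csInf_le_csInf
  · exact ⟨0, fun x hx => hx.1.1⟩
  · refine ⟨cf, ⟨le_trans (le_trans hcl hlh.le) hhf.le, le_refl _⟩, ?_⟩
    have h1 : ¬ cf < ch := by linarith
    have h2 : ¬ cf < cf := lt_irrefl _
    simp only [T, if_neg h1, if_neg h2]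
    exact hDle
  · intro p hp
    exact ⟨hp.1, le_trans hp.2 (hle p)⟩
end

section
/- Let cˡ, cʰ, cᶠ be reals with 0 ≤ cˡ < cʰ < cᶠ and K₁ˡ > 0. Set α := K₁ˡ/(cʰ − cˡ) and define F(c) := (c/2)·(2 + c/(α − c))·(cᶠ − cʰ) + ((cʰ − cˡ)²/2)·(α − c)/(cᶠ − cʰ) for c ∈ [K₁ˡ/(cᶠ − cˡ), α). Then F(K₁ˡ/(cᶠ − cˡ)) = K₁ˡ, F is continuous and strictly increasing on [K₁ˡ/(cᶠ − cˡ), α), and F(c) → +∞ as c → α from the left. Consequently, for every y > K₁ˡ there exists a unique c ∈ (K₁ˡ/(cᶠ − cˡ), α) with F(c) = y. -/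
set_option maxHeartbeats 1000000 in
/-- The scarcity boundary map
`F(c) = (c/2)(2 + c/(α−c))(cᶠ−cʰ) + ((cʰ−cˡ)²/2)(α−c)/(cᶠ−cʰ)` satisfies
`F(K₁ˡ/(cᶠ−cˡ)) = K₁ˡ`, is continuous and strictly increasing on
`[K₁ˡ/(cᶠ−cˡ), α)`, tends to `+∞` as `c → α⁻`, and hence takes each value
`y > K₁ˡ` exactly once on `(K₁ˡ/(cᶠ−cˡ), α)`. -/
theorem stmt_9 (cl ch cf K1l : ℝ)
    (hcl : 0 ≤ cl) (hlh : cl < ch) (hhf : ch < cf) (hK : 0 < K1l) :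
    let α := K1l / (ch - cl)
    let a := K1l / (cf - cl)
    let F := fun c : ℝ =>
      (c / 2) * (2 + c / (α - c)) * (cf - ch) + ((ch - cl) ^ 2 / 2) * (α - c) / (cf - ch)
    F a = K1l ∧
    ContinuousOn F (Set.Ico a α) ∧
    StrictMonoOn F (Set.Ico a α) ∧
    Filter.Tendsto F (nhdsWithin α (Set.Iio α)) Filter.atTop ∧
    ∀ y : ℝ, K1l < y → ∃! c : ℝ, c ∈ Set.Ioo a α ∧ F c = y := by
  intro α a F
  have hαdef : α = K1l / (ch - cl) := rfl
  have hadef : a = K1l / (cf - cl) := rfl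
  have hFdef : ∀ c, F c = (c / 2) * (2 + c / (α - c)) * (cf - ch)
      + ((ch - cl) ^ 2 / 2) * (α - c) / (cf - ch) := fun _ => rfl
  have hu : (0:ℝ) < ch - cl := by linarith
  have hv : (0:ℝ) < cf - ch := by linarith
  have huv : (0:ℝ) < cf - cl := by linarith
  have hα : 0 < α := div_pos hK hu
  have ha : 0 < a := div_pos hK huv
  have haα : a < α := by
    rw [hαdef, hadef]
    exact div_lt_div_of_pos_left hK hu (by linarith)
  have hKα : α * (ch - cl) = K1l := by rw [hαdef]; field_simp
  have hKa : a * (cf - cl) = K1l := by rw [hadef]; field_simp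
  -- bound : for x ≥ a, (α - x)*(cf - cl) ≤ α*(cf - ch)
  have hbound : ∀ x : ℝ, a ≤ x → (α - x) * (cf - cl) ≤ α * (cf - ch) := by
    intro x hx
    nlinarith [mul_le_mul_of_nonneg_right hx huv.le]
  -- F(a) = K1l
  have hαa : α - a = K1l * (cf - ch) / ((ch - cl) * (cf - cl)) := by
    rw [hαdef, hadef]
    field_simp
    ring
  have hFa : F a = K1l := by
    rw [hFdef, hαa, hadef]
    have h1 : ch - cl ≠ 0 := hu.ne'
    have h2 : cf - cl ≠ 0 := huv.ne'
    have h3 : cf - ch ≠ 0 := hv.ne'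
    have h4 : K1l ≠ 0 := hK.ne'
    field_simp
    ring
  -- strict monotonicity
  have hmono : StrictMonoOn F (Set.Ico a α) := by
    rintro x ⟨hax, hxα⟩ y ⟨hay, hyα⟩ hxy
    have hx0 : 0 < α - x := by linarith
    have hy0 : 0 < α - y := by linarith
    have hid : F y - F x = (y - x) *
        ((cf - ch) ^ 2 * α ^ 2 + (α - x) * (α - y) * ((cf - ch) ^ 2 - (ch - cl) ^ 2)) /
        (2 * (cf - ch) * ((α - x) * (α - y))) := by
      have h1 : α - x ≠ 0 := hx0.ne'
      have h2 : α - y ≠ 0 := hy0.ne'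
      have h3 : cf - ch ≠ 0 := hv.ne'
      rw [hFdef, hFdef]
      field_simp
      ring
    have hbx := hbound x hax
    have hby := hbound y hay
    have hnum : 0 < (cf - ch) ^ 2 * α ^ 2 + (α - x) * (α - y) * ((cf - ch) ^ 2 - (ch - cl) ^ 2) := by
      nlinarith [mul_pos hx0 hy0,
        mul_le_mul hbx hby (mul_nonneg hy0.le (by linarith)) (mul_nonneg hα.le hv.le),
        mul_pos hu hv, mul_pos (mul_pos hα hv) (mul_pos hα hv), sq_nonneg (ch - cl)]
    have hden : 0 < 2 * (cf - ch) * ((α - x) * (α - y)) := by positivity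
    have : 0 < F y - F x := by
      rw [hid]
      exact div_pos (mul_pos (sub_pos.2 hxy) hnum) hden
    linarith
  -- continuity
  have hne : ∀ c ∈ Set.Ico a α, α - c ≠ 0 := by
    rintro c ⟨_, hc⟩
    have : 0 < α - c := by linarith
    exact this.ne'
  have hFeq : F = fun c : ℝ => (c / 2) * (2 + c / (α - c)) * (cf - ch)
      + ((ch - cl) ^ 2 / 2) * (α - c) / (cf - ch) := rfl
  have hcont : ContinuousOn F (Set.Ico a α) := by
    rw [hFeq]
    apply ContinuousOn.add
    · exact (((continuousOn_id.div_const 2).mul (continuousOn_const.add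
        (continuousOn_id.div (continuousOn_const.sub continuousOn_id) hne))).mul
        continuousOn_const)
    · exact (continuousOn_const.mul (continuousOn_const.sub continuousOn_id)).div_const _
  -- tendsto atTop
  have htend : Filter.Tendsto F (nhdsWithin α (Set.Iio α)) Filter.atTop := by
    have h1 : Filter.Tendsto (fun c : ℝ => α - c) (nhdsWithin α (Set.Iio α))
        (nhdsWithin 0 (Set.Ioi 0)) := by
      apply tendsto_nhdsWithin_of_tendsto_nhds_of_eventually_within
      · have : Filter.Tendsto (fun c : ℝ => α - c) (nhds α) (nhds (α - α)) :=
          (continuous_const.sub continuous_id).tendsto α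
        simpa using this.mono_left nhdsWithin_le_nhds
      · filter_upwards [self_mem_nhdsWithin] with c hc
        simp only [Set.mem_Iio] at hc
        simp only [Set.mem_Ioi]
        linarith
    have hinv : Filter.Tendsto (fun c : ℝ => (α - c)⁻¹) (nhdsWithin α (Set.Iio α))
        Filter.atTop := tendsto_inv_nhdsGT_zero.comp h1
    have hsq : Filter.Tendsto (fun c : ℝ => c ^ 2) (nhdsWithin α (Set.Iio α))
        (nhds (α ^ 2)) := ((continuous_pow 2).tendsto α).mono_left nhdsWithin_le_nhds
    have hmul : Filter.Tendsto (fun c : ℝ => c ^ 2 * (α - c)⁻¹) (nhdsWithin α (Set.Iio α))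
        Filter.atTop := hsq.pos_mul_atTop (by positivity) hinv
    have hmul2 : Filter.Tendsto (fun c : ℝ => ((cf - ch) / 2) * (c ^ 2 * (α - c)⁻¹))
        (nhdsWithin α (Set.Iio α)) Filter.atTop := by
      exact Filter.Tendsto.const_mul_atTop (by positivity) hmul
    have hrest : Filter.Tendsto
        (fun c : ℝ => (cf - ch) * c + ((ch - cl) ^ 2 / (2 * (cf - ch))) * (α - c))
        (nhdsWithin α (Set.Iio α))
        (nhds ((cf - ch) * α + ((ch - cl) ^ 2 / (2 * (cf - ch))) * (α - α))) := by
      exact ((continuous_const.mul continuous_id).add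
        (continuous_const.mul (continuous_const.sub continuous_id))).tendsto α |>.mono_left
        nhdsWithin_le_nhds
    have hG : Filter.Tendsto
        (fun c : ℝ => (cf - ch) * c + ((ch - cl) ^ 2 / (2 * (cf - ch))) * (α - c)
          + ((cf - ch) / 2) * (c ^ 2 * (α - c)⁻¹))
        (nhdsWithin α (Set.Iio α)) Filter.atTop :=
      hrest.add_atTop hmul2
    apply hG.congr'
    filter_upwards [self_mem_nhdsWithin] with c hc
    simp only [Set.mem_Iio] at hc
    have hc0 : α - c ≠ 0 := by
      have : 0 < α - c := by linarith
      exact this.ne'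
    rw [hFdef]
    field_simp
    ring
  refine ⟨hFa, hcont, hmono, htend, ?_⟩
  intro y hy
  -- find b with F b large
  obtain ⟨b, hbmem, hby⟩ : ∃ b, b ∈ Set.Ioo a α ∧ y ≤ F b := by
    have h1 : ∀ᶠ c in nhdsWithin α (Set.Iio α), y ≤ F c := htend.eventually_ge_atTop y
    have h2 : Set.Ioo a α ∈ nhdsWithin α (Set.Iio α) :=
      Ioo_mem_nhdsLT_of_mem ⟨haα, le_refl α⟩
    rcases (h1.and (Filter.eventually_of_mem h2 (fun x hx => hx))).exists with ⟨b, hb1, hb2⟩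
    exact ⟨b, hb2, hb1⟩
  have hsub : Set.Icc a b ⊆ Set.Ico a α := fun z hz => ⟨hz.1, lt_of_le_of_lt hz.2 hbmem.2⟩
  have hIVT := intermediate_value_Icc hbmem.1.le (hcont.mono hsub)
  have hymem : y ∈ Set.Icc (F a) (F b) := ⟨by rw [hFa]; exact hy.le, hby⟩
  obtain ⟨c, hcmem, hFc⟩ := hIVT hymem
  have hcIoo : c ∈ Set.Ioo a α := by
    refine ⟨lt_of_le_of_ne hcmem.1 ?_, lt_of_le_of_lt hcmem.2 hbmem.2⟩
    intro h
    rw [← h] at hFc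
    rw [hFa] at hFc
    linarith
  refine ⟨c, ⟨hcIoo, hFc⟩, ?_⟩
  rintro c' ⟨hc'Ioo, hFc'⟩
  exact hmono.injOn ⟨hc'Ioo.1.le, hc'Ioo.2⟩ ⟨hcIoo.1.le, hcIoo.2⟩ (hFc'.trans hFc.symm)
end

section
/- Let cˡ, cʰ, cᶠ be reals with 0 ≤ cˡ < cʰ < cᶠ and K₁ˡ > 0; set α := K₁ˡ/(cʰ − cˡ). For c ∈ (K₁ˡ/(cᶠ − cˡ), α) define the switching price p̂(c) := cʰ + ((α − c)/c)·(cʰ − cˡ) and the total strategic supply T_c : ℝ → ℝ by T_c(p) = 0 for p < cʰ, T_c(p) = c·(2p − cʰ − cˡ) for cʰ ≤ p < p̂(c), and T_c(p) = c·(1 + α/(α − c))·(p − cʰ) for p̂(c) ≤ p < cᶠ. Then for all c, c' with K₁ˡ/(cᶠ − cˡ) < c < c' < α: (i) p̂(c') < p̂(c); (ii) T_c(p) ≤ T_{c'}(p) for every p < cᶠ, with strict inequality for p ∈ [cʰ, cᶠ); and (iii) for every demand level D > 0, sInf{p ∈ [0, cᶠ] : T_{c'}(p) ≥ D} ≤ sInf{p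 ∈ [0, cᶠ] : T_c(p) ≥ D}. Hence, since the equilibrium coefficient c is strictly increasing in the transferred capacity δ, a marginal transfer of high-cost capacity to Firm 1 under scarcity weakly decreases the market-clearing price. -/
private lemma stmt10_aux (cl ch cf α : ℝ) (phat : ℝ → ℝ) (T : ℝ → ℝ → ℝ)
    (hpd : ∀ x, phat x = ch + ((α - x) / x) * (ch - cl))
    (hTd : ∀ x p, T x p =
      if p < ch then (0 : ℝ)
      else if p < phat x then x * (2 * p - ch - cl)
      else x * (1 + α / (α - x)) * (p - ch))
    (hcl : 0 ≤ cl) (hlh : cl < ch) (hhf : ch < cf)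
    (c c' : ℝ) (hc0 : 0 < c) (hcc' : c < c') (hc'α : c' < α) :
    phat c' < phat c ∧
      (∀ p < cf, T c p ≤ T c' p) ∧
      (∀ p ∈ Set.Ico ch cf, T c p < T c' p) ∧
      (∀ D : ℝ, 0 < D →
        sInf ({p : ℝ | p ∈ Set.Icc 0 cf ∧ D ≤ T c' p} ∪ {cf}) ≤
        sInf ({p : ℝ | p ∈ Set.Icc 0 cf ∧ D ≤ T c p} ∪ {cf})) := by
  have hchcl : 0 < ch - cl := by linarith
  have hc'0 : 0 < c' := hc0.trans hcc'
  have hα : 0 < α := hc'0.trans hc'α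
  have hcα : c < α := hcc'.trans hc'α
  have hαc : 0 < α - c := by linarith
  have hαc' : 0 < α - c' := by linarith
  -- (i) phat decreasing
  have hkey : (α - c') / c' < (α - c) / c := by
    rw [div_lt_div_iff₀ hc'0 hc0]
    nlinarith
  have hph : phat c' < phat c := by
    rw [hpd, hpd]
    have := mul_lt_mul_of_pos_right hkey hchcl
    linarith
  -- phat exceeds ch
  have hph'ch : ch < phat c' := by
    rw [hpd]
    have : 0 < ((α - c') / c') * (ch - cl) := mul_pos (div_pos hαc' hc'0) hchcl
    linarith
  have hphch : ch < phat c := lt_trans hph'ch hph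
  -- slopes of the high branch
  have hg : c * (1 + α / (α - c)) < c' * (1 + α / (α - c')) := by
    have e1 : c * (1 + α / (α - c)) = (c * (2 * α - c)) / (α - c) := by
      field_simp [hαc.ne', hαc'.ne']; ring_nf
    have e2 : c' * (1 + α / (α - c')) = (c' * (2 * α - c')) / (α - c') := by
      field_simp [hαc.ne', hαc'.ne']; ring_nf
    rw [e1, e2, div_lt_div_iff₀ hαc hαc']
    nlinarith [mul_pos (sub_pos.2 hcc') (mul_pos hαc hαc'),
      mul_pos (sub_pos.2 hcc') (mul_pos hα hα)]
  -- bridge: above phat c', the high branch of c' dominates its low branch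
  have hbridge : ∀ p, phat c' ≤ p →
      c' * (2 * p - ch - cl) ≤ c' * (1 + α / (α - c')) * (p - ch) := by
    intro p hp
    rw [hpd] at hp
    have h1 : ((α - c') / c') * (ch - cl) ≤ p - ch := by linarith
    have h2 : (α - c') * (ch - cl) ≤ (p - ch) * c' := by
      rw [div_mul_eq_mul_div] at h1
      exact (div_le_iff₀ hc'0).mp h1
    have e2 : c' * (1 + α / (α - c')) = (c' * (2 * α - c')) / (α - c') := by
      field_simp [hαc.ne', hαc'.ne']; ring_nf
    rw [e2, div_mul_eq_mul_div, le_div_iff₀ hαc']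
    nlinarith [mul_nonneg hc'0.le (by linarith : (0:ℝ) ≤ (p - ch) * c' - (α - c') * (ch - cl))]
  -- strict pointwise comparison for p ≥ ch
  have hstrict : ∀ p, ch ≤ p → T c p < T c' p := by
    intro p hp
    rw [hTd, hTd, if_neg (not_lt.mpr hp), if_neg (not_lt.mpr hp)]
    have hlow : c * (2 * p - ch - cl) < c' * (2 * p - ch - cl) := by
      have : 0 < 2 * p - ch - cl := by linarith
      nlinarith
    by_cases h1 : p < phat c'
    · rw [if_pos h1, if_pos (h1.trans hph)]
      exact hlow
    · rw [if_neg h1]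
      have hp' : phat c' ≤ p := not_lt.mp h1
      by_cases h2 : p < phat c
      · rw [if_pos h2]
        exact lt_of_lt_of_le hlow (hbridge p hp')
      · rw [if_neg h2]
        have hpch : 0 < p - ch := by
          have := hph'ch.trans_le hp'; linarith
        exact mul_lt_mul_of_pos_right hg hpch
  -- weak pointwise comparison everywhere
  have hle : ∀ p, T c p ≤ T c' p := by
    intro p
    by_cases hp : p < ch
    · rw [hTd, hTd, if_pos hp, if_pos hp]
    · exact (hstrict p (not_lt.mp hp)).le
  refine ⟨hph, fun p _ => hle p, fun p hp => hstrict p hp.1, ?_⟩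
  intro D hD
  apply csInf_le_csInf
  · refine ⟨0, ?_⟩
    rintro p (hp | hp)
    · exact hp.1.1
    · rw [Set.mem_singleton_iff] at hp; subst hp; linarith
  · exact ⟨cf, Or.inr rfl⟩
  · rintro p (hp | hp)
    · exact Or.inl ⟨hp.1, hp.2.trans (hle p)⟩
    · exact Or.inr hp

/-- Under scarcity, a larger low-branch coefficient `c` (induced
by a larger transfer) lowers the switching price, pointwise raises the total
strategic supply below `cᶠ` (strictly on `[cʰ, cᶠ)`), and hence weakly lowers
the market-clearing price (fringe firms clear the market at `cᶠ`). -/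
theorem stmt_10 (cl ch cf K1l : ℝ)
    (hcl : 0 ≤ cl) (hlh : cl < ch) (hhf : ch < cf) (hK : 0 < K1l) :
    let α := K1l / (ch - cl)
    let phat := fun c : ℝ => ch + ((α - c) / c) * (ch - cl)
    let T := fun (c p : ℝ) =>
      if p < ch then (0 : ℝ)
      else if p < phat c then c * (2 * p - ch - cl)
      else c * (1 + α / (α - c)) * (p - ch)
    ∀ c c' : ℝ, K1l / (cf - cl) < c → c < c' → c' < α →
      (phat c' < phat c ∧
       (∀ p < cf, T c p ≤ T c' p) ∧
       (∀ p ∈ Set.Ico ch cf, T c p < T c' p) ∧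
       (∀ D : ℝ, 0 < D →
         sInf ({p : ℝ | p ∈ Set.Icc 0 cf ∧ D ≤ T c' p} ∪ {cf}) ≤
         sInf ({p : ℝ | p ∈ Set.Icc 0 cf ∧ D ≤ T c p} ∪ {cf}))) := by
  intro α phat T c c' h1 h2 h3
  have hcfcl : 0 < cf - cl := by linarith
  have hc0 : 0 < c := lt_trans (div_pos hK hcfcl) h1
  exact stmt10_aux cl ch cf α phat T (fun x => rfl) (fun x p => rfl)
    hcl hlh hhf c c' hc0 h2 h3
end

section
/- Let cˡ, cʰ, cᶠ be reals with 0 ≤ cˡ < cʰ < cᶠ and Kˡ, Kʰ > 0. For δ ∈ [0, Kʰ) define the switching price p̂(δ) := (cʰ·(Kʰ − δ) + cᶠ·Kˡ)/(Kˡ + Kʰ − δ) and the per-firm supply S_δ : ℝ → ℝ by S_δ(p) = 0 for p < cˡ, S_δ(p) = [Kˡ·(Kˡ + Kʰ − δ)/((cʰ − cˡ)·(Kʰ − δ) + (cᶠ − cˡ)·Kˡ)]·(p − cˡ) for cˡ ≤ p < p̂(δ), and S_δ(p) = [(Kˡ + Kʰ − δ)/(cᶠ − cʰ)]·(p − cʰ)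 for p̂(δ) ≤ p < cᶠ. Then for all 0 ≤ δ < δ' < Kʰ: (i) p̂(δ) < p̂(δ'); (ii) S_{δ'}(p) ≤ S_δ(p) for every p ∈ [0, cᶠ); and (iii) for every demand level D > 0, sInf{p ∈ [0, cᶠ] : 2·S_δ(p) ≥ D extended with total capacity 2(Kˡ+Kʰ) at p = cᶠ} is nondecreasing in δ. That is, when both duopolists have the same technology portfolio (Kˡ, Kʰ), a marginal transfer of high-cost capacity from Firm 2 to Firm 1 weakly increases the market-clearing price. -/
/-- Symmetric duopoly.  Transferring high-cost capacity `δ` from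
Firm 2 to Firm 1 raises the switching price, pointwise lowers the common
per-firm supply `S_δ` on `[0, cᶠ)`, and weakly raises the market-clearing
price (with total supply extended to the total capacity `2(Kˡ+Kʰ)` at `cᶠ`). -/
theorem stmt_11 (cl ch cf Kl Kh : ℝ)
    (hcl : 0 ≤ cl) (hlh : cl < ch) (hhf : ch < cf) (hKl : 0 < Kl) (hKh : 0 < Kh) :
    let phat := fun δ : ℝ => (ch * (Kh - δ) + cf * Kl) / (Kl + Kh - δ)
    let S := fun (δ p : ℝ) =>
      if p < cl then (0 : ℝ)
      else if p < phat δ then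
        (Kl * (Kl + Kh - δ) / ((ch - cl) * (Kh - δ) + (cf - cl) * Kl)) * (p - cl)
      else ((Kl + Kh - δ) / (cf - ch)) * (p - ch)
    let Tot := fun (δ p : ℝ) => if p < cf then 2 * S δ p else 2 * (Kl + Kh)
    ∀ δ δ' : ℝ, 0 ≤ δ → δ < δ' → δ' < Kh →
      (phat δ < phat δ' ∧
       (∀ p ∈ Set.Ico (0 : ℝ) cf, S δ' p ≤ S δ p) ∧
       (∀ D : ℝ, 0 < D →
         sInf {p : ℝ | p ∈ Set.Icc 0 cf ∧ D ≤ Tot δ p} ≤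
         sInf {p : ℝ | p ∈ Set.Icc 0 cf ∧ D ≤ Tot δ' p})) := by
  intro phat S Tot δ δ' h0 h12 h2K
  have hN : (0:ℝ) < Kl + Kh - δ := by linarith
  have hN' : (0:ℝ) < Kl + Kh - δ' := by linarith
  have hfc : (0:ℝ) < cf - ch := by linarith
  have hDn : (0:ℝ) < (ch - cl) * (Kh - δ) + (cf - cl) * Kl := by nlinarith
  have hDn' : (0:ℝ) < (ch - cl) * (Kh - δ') + (cf - cl) * Kl := by nlinarith
  -- (i)
  have hphat : phat δ < phat δ' := by
    show (ch * (Kh - δ) + cf * Kl) / (Kl + Kh - δ) <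
         (ch * (Kh - δ') + cf * Kl) / (Kl + Kh - δ')
    rw [div_lt_div_iff₀ hN hN']
    nlinarith [mul_pos (mul_pos hfc hKl) (show (0:ℝ) < δ' - δ by linarith)]
  have hchp : ch < phat δ := by
    show ch < (ch * (Kh - δ) + cf * Kl) / (Kl + Kh - δ)
    rw [lt_div_iff₀ hN]; nlinarith [mul_pos hfc hKl]
  have hpfc : phat δ' < cf := by
    show (ch * (Kh - δ') + cf * Kl) / (Kl + Kh - δ') < cf
    rw [div_lt_iff₀ hN']; nlinarith [mul_pos hfc (show (0:ℝ) < Kh - δ' by linarith)]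
  -- (ii)
  have hS : ∀ p ∈ Set.Ico (0 : ℝ) cf, S δ' p ≤ S δ p := by
    rintro p ⟨hp0, hpf⟩
    show (if p < cl then (0:ℝ)
      else if p < phat δ' then
        (Kl * (Kl + Kh - δ') / ((ch - cl) * (Kh - δ') + (cf - cl) * Kl)) * (p - cl)
      else ((Kl + Kh - δ') / (cf - ch)) * (p - ch)) ≤
      (if p < cl then (0:ℝ)
      else if p < phat δ then
        (Kl * (Kl + Kh - δ) / ((ch - cl) * (Kh - δ) + (cf - cl) * Kl)) * (p - cl)
      else ((Kl + Kh - δ) / (cf - ch)) * (p - ch))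
    by_cases hpc : p < cl
    · simp [hpc]
    rw [if_neg hpc, if_neg hpc]
    have hpc' : cl ≤ p := not_lt.1 hpc
    have hslope : Kl * (Kl + Kh - δ') / ((ch - cl) * (Kh - δ') + (cf - cl) * Kl) ≤
        Kl * (Kl + Kh - δ) / ((ch - cl) * (Kh - δ) + (cf - cl) * Kl) := by
      rw [div_le_div_iff₀ hDn' hDn]
      nlinarith [mul_nonneg (mul_pos hfc hKl).le (show (0:ℝ) ≤ δ' - δ by linarith),
        mul_pos (mul_pos hfc hKl) (show (0:ℝ) < δ' - δ by linarith)]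
    have hlow : Kl * (Kl + Kh - δ') / ((ch - cl) * (Kh - δ') + (cf - cl) * Kl) * (p - cl) ≤
        Kl * (Kl + Kh - δ) / ((ch - cl) * (Kh - δ) + (cf - cl) * Kl) * (p - cl) :=
      mul_le_mul_of_nonneg_right hslope (by linarith)
    have hlowhigh : ∀ q : ℝ, phat δ ≤ q →
        Kl * (Kl + Kh - δ) / ((ch - cl) * (Kh - δ) + (cf - cl) * Kl) * (q - cl) ≤
        (Kl + Kh - δ) / (cf - ch) * (q - ch) := by
      intro q hq
      have hq' : ch * (Kh - δ) + cf * Kl ≤ q * (Kl + Kh - δ) := by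
        rw [show phat δ = (ch * (Kh - δ) + cf * Kl) / (Kl + Kh - δ) from rfl,
          div_le_iff₀ hN] at hq
        exact hq
      have key : (0:ℝ) ≤ (q - ch) * (Kl + Kh - δ) - (cf - ch) * Kl := by nlinarith
      rw [div_mul_eq_mul_div, div_mul_eq_mul_div, div_le_div_iff₀ hDn hfc]
      nlinarith [mul_nonneg (mul_nonneg hN.le (show (0:ℝ) ≤ ch - cl by linarith)) key]
    by_cases h1 : p < phat δ
    · rw [if_pos h1, if_pos (lt_trans h1 hphat)]
      exact hlow
    · rw [if_neg h1]
      by_cases h2 : p < phat δ'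
      · rw [if_pos h2]
        exact le_trans hlow (hlowhigh p (not_lt.1 h1))
      · rw [if_neg h2]
        have hchp2 : ch ≤ p := le_trans hchp.le (not_lt.1 h1)
        exact mul_le_mul_of_nonneg_right
          ((div_le_div_iff_of_pos_right hfc).2 (by linarith)) (by linarith)
  -- supply bound on [0, cf)
  have hSbd : ∀ p, 0 ≤ p → p < cf → S δ p ≤ Kl + Kh := by
    intro p hp0 hpf
    show (if p < cl then (0:ℝ)
      else if p < phat δ then
        (Kl * (Kl + Kh - δ) / ((ch - cl) * (Kh - δ) + (cf - cl) * Kl)) * (p - cl)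
      else ((Kl + Kh - δ) / (cf - ch)) * (p - ch)) ≤ Kl + Kh
    by_cases hpc : p < cl
    · rw [if_pos hpc]; linarith
    rw [if_neg hpc]
    have hpc' : cl ≤ p := not_lt.1 hpc
    by_cases h1 : p < phat δ
    · rw [if_pos h1]
      have hq' : p * (Kl + Kh - δ) < ch * (Kh - δ) + cf * Kl := by
        rw [show phat δ = (ch * (Kh - δ) + cf * Kl) / (Kl + Kh - δ) from rfl,
          lt_div_iff₀ hN] at h1
        exact h1
      rw [div_mul_eq_mul_div, div_le_iff₀ hDn]
      nlinarith [mul_pos hKl hDn, mul_pos hKh hDn]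
    · rw [if_neg h1]
      rw [div_mul_eq_mul_div, div_le_iff₀ hfc]
      nlinarith
  refine ⟨hphat, hS, ?_⟩
  -- (iii)
  intro D hD
  have hcf0 : (0:ℝ) ≤ cf := by linarith
  have hsub : {p : ℝ | p ∈ Set.Icc 0 cf ∧ D ≤ Tot δ' p} ⊆
      {p : ℝ | p ∈ Set.Icc 0 cf ∧ D ≤ Tot δ p} := by
    rintro p ⟨hpI, hpD⟩
    refine ⟨hpI, le_trans hpD ?_⟩
    show (if p < cf then 2 * S δ' p else 2 * (Kl + Kh)) ≤
         (if p < cf then 2 * S δ p else 2 * (Kl + Kh))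
    by_cases hpf : p < cf
    · rw [if_pos hpf, if_pos hpf]
      have := hS p ⟨hpI.1, hpf⟩
      linarith
    · rw [if_neg hpf, if_neg hpf]
  by_cases hDc : D ≤ 2 * (Kl + Kh)
  · apply csInf_le_csInf
    · exact ⟨0, fun p hp => hp.1.1⟩
    · refine ⟨cf, ⟨Set.right_mem_Icc.2 hcf0, ?_⟩⟩
      show D ≤ (if cf < cf then 2 * S δ' cf else 2 * (Kl + Kh))
      rw [if_neg (lt_irrefl cf)]
      exact hDc
    · exact hsub
  · have hA : {p : ℝ | p ∈ Set.Icc 0 cf ∧ D ≤ Tot δ p} = ∅ := by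
      ext p
      simp only [Set.mem_setOf_eq, Set.mem_empty_iff_false, iff_false, not_and]
      intro hpI hpD
      obtain ⟨hp0, hpcf⟩ := Set.mem_Icc.1 hpI
      by_cases hpf : p < cf
      · have hb := hSbd p hp0 hpf
        have : Tot δ p = 2 * S δ p := if_pos hpf
        rw [this] at hpD
        push_neg at hDc
        linarith
      · have : Tot δ p = 2 * (Kl + Kh) := if_neg hpf
        rw [this] at hpD
        push_neg at hDc
        linarith
    have hB : {p : ℝ | p ∈ Set.Icc 0 cf ∧ D ≤ Tot δ' p} = ∅ :=
      Set.eq_empty_of_subset_empty (hA ▸ hsub)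
    rw [hA, hB]
end

section
/- Let c be a real number, U ⊆ (c, ∞) an open interval, g : ℝ → ℝ continuous on U, and f : ℝ → ℝ. Suppose that for all p, p' ∈ U one has (g(p)/(p' − c))·(p − p') ≥ f(p) − f(p'). Then f is differentiable at every p ∈ U with f'(p) = g(p)/(p − c). -/
/-- Analytic core of the smoothness lemma.  If on an open
interval `U = (a, b) ⊆ (c, ∞)` a continuous `g` and a function `f` satisfy
`(g(p)/(p'−c))·(p−p') ≥ f(p) − f(p')` for all `p, p' ∈ U`, then `f` is
differentiable on `U` with `f'(p) = g(p)/(p−c)`. -/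
theorem stmt_12 (c a b : ℝ) (hca : c ≤ a)
    (g f : ℝ → ℝ) (hg : ContinuousOn g (Set.Ioo a b))
    (h : ∀ p ∈ Set.Ioo a b, ∀ p' ∈ Set.Ioo a b,
      f p - f p' ≤ (g p / (p' - c)) * (p - p')) :
    ∀ p ∈ Set.Ioo a b, HasDerivAt f (g p / (p - c)) p := by
  intro p hp
  have hpc : 0 < p - c := by have := hp.1; linarith
  have hgp : ContinuousAt g p := hg.continuousAt (isOpen_Ioo.mem_nhds hp)
  rw [hasDerivAt_iff_tendsto_slope]
  have hlo : Filter.Tendsto (fun p' => g p / (p' - c)) (nhdsWithin p {p}ᶜ)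
      (nhds (g p / (p - c))) := by
    apply Filter.Tendsto.mono_left _ nhdsWithin_le_nhds
    exact Filter.Tendsto.div tendsto_const_nhds
      ((continuous_id.sub continuous_const).tendsto p) hpc.ne'
  have hhi : Filter.Tendsto (fun p' => g p' / (p - c)) (nhdsWithin p {p}ᶜ)
      (nhds (g p / (p - c))) := by
    apply Filter.Tendsto.mono_left _ nhdsWithin_le_nhds
    exact hgp.div_const _
  have hmin := hlo.min hhi
  have hmax := hlo.max hhi
  rw [min_self] at hmin
  rw [max_self] at hmax
  apply tendsto_of_tendsto_of_tendsto_of_le_of_le' hmin hmax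
  all_goals
    filter_upwards [nhdsWithin_le_nhds (isOpen_Ioo.eventually_mem hp),
      self_mem_nhdsWithin] with p' hp' hne
  all_goals
    have hne' : p' ≠ p := hne
    have hpc' : 0 < p' - c := by have := hp'.1; linarith
    have h1 := h p hp p' hp'
    have h2 := h p' hp' p hp
    rcases hne'.lt_or_gt with hlt | hlt
  -- Goal 1: min ≤ slope, case p' < p
  · have hd : 0 < p - p' := sub_pos.mpr hlt
    refine le_trans (min_le_right _ _) ?_
    rw [slope_comm, slope_def_field, le_div_iff₀ hd]
    have : (g p' / (p - c)) * (p - p') = -((g p' / (p - c)) * (p' - p)) := by ring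
    rw [this]; linarith
  -- Goal 1: min ≤ slope, case p < p'
  · have hd : 0 < p' - p := sub_pos.mpr hlt
    refine le_trans (min_le_left _ _) ?_
    rw [slope_def_field, le_div_iff₀ hd]
    have : (g p / (p' - c)) * (p' - p) = -((g p / (p' - c)) * (p - p')) := by ring
    rw [this]; linarith
  -- Goal 2: slope ≤ max, case p' < p
  · have hd : 0 < p - p' := sub_pos.mpr hlt
    refine le_trans ?_ (le_max_left _ _)
    rw [slope_comm, slope_def_field, div_le_iff₀ hd]
    exact h1
  -- Goal 2: slope ≤ max, case p < p'
  · have hd : 0 < p' - p := sub_pos.mpr hlt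
    refine le_trans ?_ (le_max_right _ _)
    rw [slope_def_field, div_le_iff₀ hd]
    exact h2
end

section
/- Let cˡ, cʰ, cᶠ be reals with 0 ≤ cˡ < cʰ < cᶠ and K₁ˡ > 0; set α := K₁ˡ/(cʰ − cˡ). Let c₁ ∈ (K₁ˡ/(cᶠ − cˡ), α) and define c₃ := (c₁/2)·(1 + α/(α − c₁)), c₄ := ((cʰ − cˡ)²/2)·(α − c₁), and p̂ := cʰ + ((α − c₁)/c₁)·(cʰ − cˡ). Define S₁(p) := c₁·(p − cˡ) for p ∈ (cʰ, p̂) and S₁(p) := c₃·(p − cʰ) + c₄/(p − cʰ) for p ∈ [p̂, cᶠ]; define S₂(p) := c₁·(p − cʰ) for p ∈ (cʰ, p̂) and S₂(p) := c₃·(p − cʰ) − c₄/(p − cʰ) for p ∈ [p̂, cᶠ]. Then: (i) cʰ < p̂ < cᶠ; (ii) S₁ and S₂ are continuous at p̂, with S₁(p̂) = K₁ˡ; (iii) on (cʰ, p̂), S₁(p) = (p − cˡ)·S₂'(p) and S₂(p) = (p − cʰ)·S₁'(p); (iv) on (p̂, cᶠ), S₁(p) = (p − cʰ)·S₂'(p)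 and S₂(p) = (p − cʰ)·S₁'(p); and (v) S₁(cᶠ) = (c₁/2)·(2 + c₁/(α − c₁))·(cᶠ − cʰ) + ((cʰ − cˡ)²/2)·(α − c₁)/(cᶠ − cʰ). -/
theorem stmt_16_aux (cl ch cf K1l c₁ α c₃ c₄ phat : ℝ) (S₁ S₂ : ℝ → ℝ)
    (hcl : 0 ≤ cl) (hlh : cl < ch) (hhf : ch < cf) (hK : 0 < K1l)
    (hc1l : K1l / (cf - cl) < c₁) (hc1u : c₁ < K1l / (ch - cl))
    (hα : α = K1l / (ch - cl))
    (hc₃ : c₃ = (c₁ / 2) * (1 + α / (α - c₁)))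
    (hc₄ : c₄ = ((ch - cl) ^ 2 / 2) * (α - c₁))
    (hp : phat = ch + ((α - c₁) / c₁) * (ch - cl))
    (hS₁ : S₁ = fun p : ℝ => if p < phat then c₁ * (p - cl) else c₃ * (p - ch) + c₄ / (p - ch))
    (hS₂ : S₂ = fun p : ℝ => if p < phat then c₁ * (p - ch) else c₃ * (p - ch) - c₄ / (p - ch)) :
    (ch < phat ∧ phat < cf) ∧
    (ContinuousAt S₁ phat ∧ ContinuousAt S₂ phat ∧ S₁ phat = K1l) ∧
    (∀ p ∈ Set.Ioo ch phat, S₁ p = (p - cl) * deriv S₂ p ∧ S₂ p = (p - ch) * deriv S₁ p) ∧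
    (∀ p ∈ Set.Ioo phat cf, S₁ p = (p - ch) * deriv S₂ p ∧ S₂ p = (p - ch) * deriv S₁ p) ∧
    S₁ cf = (c₁ / 2) * (2 + c₁ / (α - c₁)) * (cf - ch)
      + ((ch - cl) ^ 2 / 2) * (α - c₁) / (cf - ch) := by
  have hhl : (0:ℝ) < ch - cl := by linarith
  have hfl : (0:ℝ) < cf - cl := by linarith
  have hc1pos : 0 < c₁ := lt_trans (div_pos hK hfl) hc1l
  have hαc : 0 < α - c₁ := by
    have : c₁ < α := by rw [hα]; exact hc1u
    linarith
  have hαcne : α - c₁ ≠ 0 := ne_of_gt hαc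
  have hc1ne : c₁ ≠ 0 := ne_of_gt hc1pos
  have hK1 : α * (ch - cl) = K1l := by rw [hα]; field_simp
  have hd0 : 0 < ((α - c₁) / c₁) * (ch - cl) := by positivity
  have h1 : ch < phat := by rw [hp]; linarith
  have h2 : phat < cf := by
    have hKc : K1l < c₁ * (cf - cl) := (div_lt_iff₀ hfl).mp hc1l
    have hlt : (α - c₁) * (ch - cl) < (cf - ch) * c₁ := by nlinarith
    have h2' : ((α - c₁) * (ch - cl)) / c₁ < cf - ch := (div_lt_iff₀ hc1pos).mpr hlt
    rw [hp, div_mul_eq_mul_div]; linarith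
  have hdne : phat - ch ≠ 0 := ne_of_gt (by linarith)
  have hhlne : ch - cl ≠ 0 := ne_of_gt hhl
  have hdval : phat - ch = (α - c₁) * (ch - cl) / c₁ := by rw [hp]; ring
  have hdval' : (phat - ch) * c₁ = (α - c₁) * (ch - cl) := by
    rw [hdval]; field_simp
  have h3 : c₃ * (phat - ch) = (2 * α - c₁) * (ch - cl) / 2 := by
    rw [hc₃, hdval]; field_simp; ring
  have h4 : c₄ / (phat - ch) = c₁ * (ch - cl) / 2 := by
    rw [hc₄, hdval]; field_simp
  have hval1 : c₁ * (phat - cl) = c₃ * (phat - ch) + c₄ / (phat - ch) := by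
    have e : c₁ * (phat - cl) = (phat - ch) * c₁ + c₁ * (ch - cl) := by ring
    rw [e, hdval', h3, h4]; ring
  have hval2 : c₁ * (phat - ch) = c₃ * (phat - ch) - c₄ / (phat - ch) := by
    rw [show c₁ * (phat - ch) = (phat - ch) * c₁ from mul_comm _ _, hdval', h3, h4]; ring
  have hval0 : c₁ * (phat - cl) = K1l := by
    have e : c₁ * (phat - cl) = (phat - ch) * c₁ + c₁ * (ch - cl) := by ring
    have e2 : (α - c₁) * (ch - cl) + c₁ * (ch - cl) = α * (ch - cl) := by ring
    rw [e, hdval', e2, hK1]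
  have hsub : ContinuousAt (fun p : ℝ => p - ch) phat := by fun_prop
  have cg1 : ContinuousAt (fun p : ℝ => c₃ * (p - ch) + c₄ / (p - ch)) phat :=
    (continuousAt_const.mul hsub).add (continuousAt_const.div hsub hdne)
  have cg2 : ContinuousAt (fun p : ℝ => c₃ * (p - ch) - c₄ / (p - ch)) phat :=
    (continuousAt_const.mul hsub).sub (continuousAt_const.div hsub hdne)
  have clin1 : ContinuousAt (fun p : ℝ => c₁ * (p - cl)) phat := by fun_prop
  have clin2 : ContinuousAt (fun p : ℝ => c₁ * (p - ch)) phat := by fun_prop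
  refine ⟨⟨h1, h2⟩, ⟨?_, ?_, ?_⟩, ?_, ?_, ?_⟩
  · -- ContinuousAt S₁ phat
    rw [continuousAt_iff_continuous_left_right]
    constructor
    · refine clin1.continuousWithinAt.congr (fun y hy => ?_) ?_
      · rcases lt_or_eq_of_le (Set.mem_Iic.mp hy) with h | h
        · rw [hS₁]; simp [if_pos h]
        · subst h; rw [hS₁]; simp only [lt_irrefl, if_false]; exact hval1.symm
      · rw [hS₁]; simp only [lt_irrefl, if_false]; exact hval1.symm
    · refine cg1.continuousWithinAt.congr (fun y hy => ?_) ?_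
      · rw [hS₁]; simp [not_lt.mpr (Set.mem_Ici.mp hy)]
      · rw [hS₁]; simp [lt_irrefl]
  · -- ContinuousAt S₂ phat
    rw [continuousAt_iff_continuous_left_right]
    constructor
    · refine clin2.continuousWithinAt.congr (fun y hy => ?_) ?_
      · rcases lt_or_eq_of_le (Set.mem_Iic.mp hy) with h | h
        · rw [hS₂]; simp [if_pos h]
        · subst h; rw [hS₂]; simp only [lt_irrefl, if_false]; exact hval2.symm
      · rw [hS₂]; simp only [lt_irrefl, if_false]; exact hval2.symm
    · refine cg2.continuousWithinAt.congr (fun y hy => ?_) ?_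
      · rw [hS₂]; simp [not_lt.mpr (Set.mem_Ici.mp hy)]
      · rw [hS₂]; simp [lt_irrefl]
  · -- S₁ phat = K1l
    rw [hS₁]; simp only [lt_irrefl, if_false]
    rw [← hval1]; exact hval0
  · -- mixed FOC on (ch, phat)
    intro p hpm
    have hev1 : S₁ =ᶠ[nhds p] fun x => c₁ * (x - cl) := by
      filter_upwards [Iio_mem_nhds hpm.2] with x hx
      rw [hS₁]; exact if_pos hx
    have hev2 : S₂ =ᶠ[nhds p] fun x => c₁ * (x - ch) := by
      filter_upwards [Iio_mem_nhds hpm.2] with x hx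
      rw [hS₂]; exact if_pos hx
    have hD1 : HasDerivAt (fun x : ℝ => c₁ * (x - cl)) c₁ p := by
      simpa using ((hasDerivAt_id p).sub_const cl).const_mul c₁
    have hD2 : HasDerivAt (fun x : ℝ => c₁ * (x - ch)) c₁ p := by
      simpa using ((hasDerivAt_id p).sub_const ch).const_mul c₁
    have hd1 : deriv S₁ p = c₁ := by rw [hev1.deriv_eq]; exact hD1.deriv
    have hd2 : deriv S₂ p = c₁ := by rw [hev2.deriv_eq]; exact hD2.deriv
    constructor
    · rw [hS₁, hd2]; simp only [if_pos hpm.2]; ring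
    · rw [hS₂, hd1]; simp only [if_pos hpm.2]; ring
  · -- common FOC on (phat, cf)
    intro p hpm
    have hpch : ch < p := lt_trans h1 hpm.1
    have hpne : p - ch ≠ 0 := ne_of_gt (by linarith)
    have hnp : ¬ p < phat := not_lt.mpr hpm.1.le
    have hev1 : S₁ =ᶠ[nhds p] fun x => c₃ * (x - ch) + c₄ / (x - ch) := by
      filter_upwards [Ioi_mem_nhds hpm.1] with x hx
      rw [hS₁]; exact if_neg (not_lt.mpr hx.le)
    have hev2 : S₂ =ᶠ[nhds p] fun x => c₃ * (x - ch) - c₄ / (x - ch) := by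
      filter_upwards [Ioi_mem_nhds hpm.1] with x hx
      rw [hS₂]; exact if_neg (not_lt.mpr hx.le)
    have h_id : HasDerivAt (fun x : ℝ => x - ch) 1 p := (hasDerivAt_id p).sub_const ch
    have hA : HasDerivAt (fun x : ℝ => c₃ * (x - ch)) c₃ p := by
      simpa using h_id.const_mul c₃
    have hB : HasDerivAt (fun x : ℝ => c₄ / (x - ch)) (-c₄ / (p - ch) ^ 2) p := by
      have := (hasDerivAt_const p c₄).div h_id hpne
      exact this.congr_deriv (by ring)
    have hd1 : deriv S₁ p = c₃ - c₄ / (p - ch) ^ 2 := by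
      rw [hev1.deriv_eq]; exact (hA.add hB).deriv.trans (by ring)
    have hd2 : deriv S₂ p = c₃ + c₄ / (p - ch) ^ 2 := by
      rw [hev2.deriv_eq]; exact (hA.sub hB).deriv.trans (by ring)
    constructor
    · rw [hS₁, hd2]; simp only [if_neg hnp]; field_simp
    · rw [hS₂, hd1]; simp only [if_neg hnp]; field_simp
  · -- value at cf
    have hfne : cf - ch ≠ 0 := ne_of_gt (by linarith)
    rw [hS₁]; simp only [not_lt.mpr h2.le, if_neg (not_lt.mpr h2.le)]
    rw [hc₃, hc₄]; simp only [if_false]; field_simp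
    ring

/-- Scarcity equilibrium verification.  With
`c₁ ∈ (K₁ˡ/(cᶠ−cˡ), α)` and the induced coefficients `c₃, c₄` and switching
price `p̂`, the piecewise supplies `S₁, S₂` satisfy: `cʰ < p̂ < cᶠ`; continuity
at `p̂` with `S₁(p̂) = K₁ˡ`; the mixed-cost FOC system on `(cʰ, p̂)`; the
common-cost FOC system on `(p̂, cᶠ)`; and the stated value of `S₁(cᶠ)`. -/
theorem stmt_16 (cl ch cf K1l c₁ : ℝ)
    (hcl : 0 ≤ cl) (hlh : cl < ch) (hhf : ch < cf) (hK : 0 < K1l)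
    (hc₁ : c₁ ∈ Set.Ioo (K1l / (cf - cl)) (K1l / (ch - cl))) :
    let α := K1l / (ch - cl)
    let c₃ := (c₁ / 2) * (1 + α / (α - c₁))
    let c₄ := ((ch - cl) ^ 2 / 2) * (α - c₁)
    let phat := ch + ((α - c₁) / c₁) * (ch - cl)
    let S₁ := fun p : ℝ => if p < phat then c₁ * (p - cl) else c₃ * (p - ch) + c₄ / (p - ch)
    let S₂ := fun p : ℝ => if p < phat then c₁ * (p - ch) else c₃ * (p - ch) - c₄ / (p - ch)
    (ch < phat ∧ phat < cf) ∧
    (ContinuousAt S₁ phat ∧ ContinuousAt S₂ phat ∧ S₁ phat = K1l) ∧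
    (∀ p ∈ Set.Ioo ch phat, S₁ p = (p - cl) * deriv S₂ p ∧ S₂ p = (p - ch) * deriv S₁ p) ∧
    (∀ p ∈ Set.Ioo phat cf, S₁ p = (p - ch) * deriv S₂ p ∧ S₂ p = (p - ch) * deriv S₁ p) ∧
    S₁ cf = (c₁ / 2) * (2 + c₁ / (α - c₁)) * (cf - ch)
      + ((ch - cl) ^ 2 / 2) * (α - c₁) / (cf - ch) := by
  intro α c₃ c₄ phat S₁ S₂
  exact stmt_16_aux cl ch cf K1l c₁ α c₃ c₄ phat S₁ S₂ hcl hlh hhf hK hc₁.1 hc₁.2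
    rfl rfl rfl rfl rfl rfl
end

section
/- Let cˡ, cʰ, cᶠ be reals with 0 ≤ cˡ < cʰ < cᶠ and Kˡ, Kʰ > 0. Define p̂ := (cʰ·Kʰ + cᶠ·Kˡ)/(Kˡ + Kʰ), c₆ := (Kˡ + Kʰ)/(cᶠ − cʰ), c₇ := Kˡ·(Kˡ + Kʰ)/((cʰ − cˡ)·Kʰ + (cᶠ − cˡ)·Kˡ), and S(p) := c₇·(p − cˡ) for p ∈ [cˡ, p̂), S(p) := c₆·(p − cʰ) for p ∈ [p̂, cᶠ]. Then: (i) cʰ < p̂ < cᶠ; (ii) S is continuous at p̂ with S(p̂) = Kˡ (both branch formulas evaluate to Kˡ at p̂); (iii) S(cᶠ) = Kˡ + Kʰ; (iv) S(p) = (p − cˡ)·S'(p) for all p ∈ (cˡ, p̂); and (v) S(p) = (p − cʰ)·S'(p) for all p ∈ (p̂, cᶠ). -/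
/-- Symmetric equilibrium verification.  With the switching price
`p̂ = (cʰKʰ + cᶠKˡ)/(Kˡ+Kʰ)` and coefficients `c₆, c₇`, the piecewise per-firm
supply `S` satisfies: `cʰ < p̂ < cᶠ`; continuity at `p̂` with both branch
formulas equal to `Kˡ` there; `S(cᶠ) = Kˡ+Kʰ`; and the FOC `S(p) = (p−cᵗ)S'(p)`
with `cᵗ = cˡ` below `p̂` and `cᵗ = cʰ` above. -/
theorem stmt_17 (cl ch cf Kl Kh : ℝ)
    (hcl : 0 ≤ cl) (hlh : cl < ch) (hhf : ch < cf) (hKl : 0 < Kl) (hKh : 0 < Kh) :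
    let phat := (ch * Kh + cf * Kl) / (Kl + Kh)
    let c₆ := (Kl + Kh) / (cf - ch)
    let c₇ := Kl * (Kl + Kh) / ((ch - cl) * Kh + (cf - cl) * Kl)
    let S := fun p : ℝ => if p < phat then c₇ * (p - cl) else c₆ * (p - ch)
    (ch < phat ∧ phat < cf) ∧
    (ContinuousAt S phat ∧ S phat = Kl ∧ c₇ * (phat - cl) = Kl ∧ c₆ * (phat - ch) = Kl) ∧
    S cf = Kl + Kh ∧
    (∀ p ∈ Set.Ioo cl phat, S p = (p - cl) * deriv S p) ∧
    (∀ p ∈ Set.Ioo phat cf, S p = (p - ch) * deriv S p) := by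
  intro phat c₆ c₇ S
  have hA : (0:ℝ) < Kl + Kh := by linarith
  have hD : (0:ℝ) < (ch - cl) * Kh + (cf - cl) * Kl := by nlinarith
  have hfc : (0:ℝ) < cf - ch := by linarith
  have hph : phat - ch = (cf - ch) * Kl / (Kl + Kh) := by
    show (ch * Kh + cf * Kl) / (Kl + Kh) - ch = _
    field_simp; ring
  have hpl : phat - cl = ((ch - cl) * Kh + (cf - cl) * Kl) / (Kl + Kh) := by
    show (ch * Kh + cf * Kl) / (Kl + Kh) - cl = _
    field_simp; ring
  have hpf : cf - phat = (cf - ch) * Kh / (Kl + Kh) := by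
    show cf - (ch * Kh + cf * Kl) / (Kl + Kh) = _
    field_simp; ring
  have h1 : ch < phat := by
    have : (0:ℝ) < (cf - ch) * Kl / (Kl + Kh) := by positivity
    linarith [hph ▸ this]
  have h2 : phat < cf := by
    have : (0:ℝ) < (cf - ch) * Kh / (Kl + Kh) := by positivity
    linarith [hpf ▸ this]
  have hc7 : c₇ * (phat - cl) = Kl := by
    rw [hpl]
    show Kl * (Kl + Kh) / ((ch - cl) * Kh + (cf - cl) * Kl) * _ = Kl
    field_simp
    exact div_self (ne_of_gt (by nlinarith))
  have hc6 : c₆ * (phat - ch) = Kl := by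
    rw [hph]
    show (Kl + Kh) / (cf - ch) * ((cf - ch) * Kl / (Kl + Kh)) = Kl
    field_simp
  have hSp : S phat = Kl := by
    show (if phat < phat then c₇ * (phat - cl) else c₆ * (phat - ch)) = Kl
    simp [hc6]
  refine ⟨⟨h1, h2⟩, ⟨?_, hSp, hc7, hc6⟩, ?_, ?_, ?_⟩
  · -- continuity at phat
    rw [ContinuousAt, hSp]
    rw [← nhdsLE_sup_nhdsGE (a := phat), Filter.tendsto_sup]
    constructor
    · have : Set.EqOn S (fun p => c₇ * (p - cl)) (Set.Iic phat) := by
        intro x hx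
        by_cases h : x < phat
        · simp only [S, if_pos h]
        · have hxe : x = phat := le_antisymm hx (not_lt.mp h)
          subst hxe
          simp only [S, if_neg h]
          rw [hc6, ← hc7]
      have hcont : Filter.Tendsto (fun p => c₇ * (p - cl)) (nhdsWithin phat (Set.Iic phat)) (nhds Kl) := by
        have : ContinuousAt (fun p => c₇ * (p - cl)) phat := by fun_prop
        rw [← hc7]
        exact this.continuousWithinAt.tendsto
      exact hcont.congr' (by
        filter_upwards [self_mem_nhdsWithin] with x hx using (this hx).symm)
    · have : Set.EqOn S (fun p => c₆ * (p - ch)) (Set.Ici phat) := by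
        intro x hx
        simp only [S, if_neg (not_lt.mpr (Set.mem_Ici.mp hx))]
      have hcont : Filter.Tendsto (fun p => c₆ * (p - ch)) (nhdsWithin phat (Set.Ici phat)) (nhds Kl) := by
        have : ContinuousAt (fun p => c₆ * (p - ch)) phat := by fun_prop
        rw [← hc6]
        exact this.continuousWithinAt.tendsto
      exact hcont.congr' (by
        filter_upwards [self_mem_nhdsWithin] with x hx using (this hx).symm)
  · -- S cf
    show (if cf < phat then _ else c₆ * (cf - ch)) = Kl + Kh
    rw [if_neg (not_lt.mpr h2.le)]
    show (Kl + Kh) / (cf - ch) * (cf - ch) = Kl + Kh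
    field_simp
  · -- FOC low branch
    intro p hp
    have hmem : {x : ℝ | x < phat} ∈ nhds p := isOpen_Iio.mem_nhds hp.2
    have heq : S =ᶠ[nhds p] fun x => c₇ * (x - cl) := by
      filter_upwards [hmem] with x hx
      simp only [S, if_pos hx]
    have hd : deriv S p = c₇ := by
      rw [heq.deriv_eq]
      have : HasDerivAt (fun x : ℝ => c₇ * (x - cl)) (c₇ * 1) p :=
        ((hasDerivAt_id p).sub_const cl).const_mul c₇
      simpa using this.deriv
    rw [hd]
    show (if p < phat then c₇ * (p - cl) else _) = _
    rw [if_pos hp.2]; ring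
  · -- FOC high branch
    intro p hp
    have hmem : {x : ℝ | phat < x} ∈ nhds p := isOpen_Ioi.mem_nhds hp.1
    have heq : S =ᶠ[nhds p] fun x => c₆ * (x - ch) := by
      filter_upwards [hmem] with x hx
      simp only [S, if_neg (not_lt.mpr hx.le)]
    have hd : deriv S p = c₆ := by
      rw [heq.deriv_eq]
      have : HasDerivAt (fun x : ℝ => c₆ * (x - ch)) (c₆ * 1) p :=
        ((hasDerivAt_id p).sub_const ch).const_mul c₆
      simpa using this.deriv
    rw [hd]
    show (if p < phat then _ else c₆ * (p - ch)) = _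
    rw [if_neg (not_lt.mpr hp.1.le)]; ring
end
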